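/- arXiv:1609.06139 — 4 statements merged into one kernel-verified Lean document; each statement's English description precedes it below -/
import Mathlib

section
/- The set of PM-simulable measurements equals the convex hull of projective measurements: a POVM obtained by applying classical post-processing to a convex combination of projective measurements is itself a convex combination of projective measurements (with outcomes possibly relabelled/coarse-grained), i.e. SP(d,n) = conv(PP(d,n)). -/
open scoped ComplexOrder

/-- An `n`-outcome POVM on `ℂ^d`. -/
def IsPOVM {d n : ℕ} (M : Fin n → Matrix (Fin d) (Fin d) ℂ) : Prop :=
  (∀ i, (M i).PosSemidef) ∧ ∑ i, M i = 1

/-- A projective measurement: a POVM whose effects are orthogonal projections. -/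
def IsProjectivePOVM {d n : ℕ} (M : Fin n → Matrix (Fin d) (Fin d) ℂ) : Prop :=
  IsPOVM M ∧ ∀ i, (M i).IsHermitian ∧ M i * M i = M i

/-- The set `SP(d,n)` of PM-simulable measurements: POVMs obtained by classical
post-processing (a stochastic matrix `q`) of a convex mixture of projective
measurements. -/
def SP (d n : ℕ) : Set (Fin n → Matrix (Fin d) (Fin d) ℂ) :=
  {M | ∃ (K : ℕ) (P : Fin K → (Fin n → Matrix (Fin d) (Fin d) ℂ))
      (p : Fin K → ℝ) (q : Fin n → Fin n → ℝ),
    (∀ k, IsProjectivePOVM (P k)) ∧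
    (∀ k, 0 ≤ p k) ∧ (∑ k, p k) = 1 ∧
    (∀ i j, 0 ≤ q i j) ∧ (∀ j, ∑ i, q i j = 1) ∧
    ∀ i, M i = ∑ j, (q i j : ℂ) • (∑ k, (p k : ℂ) • P k j)}

/-!
A column-stochastic matrix `q` is the mixture `∑_f (∏_j q (f j) j) • δ_f` of the deterministic
post-processings `δ_f` that relabel outcome `j` as `f j`. Relabelling a projective measurement
gives again a projective measurement, because its effects are mutually orthogonal: projections
`p`, `q` with `p + q ≤ 1` satisfy `p * q = 0`. Hence post-processing maps the convex hull of
projective measurements into itself, and the identity post-processing gives the converse inclusion.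
-/

open Finset
-- Square complex matrices as a C⋆-algebra (operator norm), ordered by positive semidefiniteness.
open scoped Matrix.Norms.L2Operator MatrixOrder

theorem IsStarProjection.mul_eq_zero_of_add_le_one {A : Type*} [CStarAlgebra A] [PartialOrder A]
    [StarOrderedRing A] {p q : A} (hp : IsStarProjection p) (hq : IsStarProjection q)
    (hpq : p + q ≤ 1) : p * q = 0 := by
  have h : (1 - p) * q = q := (hq.le_iff_mul_eq_right hp.one_sub).1 (by rwa [le_sub_iff_add_le'])
  rwa [sub_mul, one_mul, sub_eq_self] at h

theorem CompleteOrthogonalIdempotents.of_isStarProjection {A ι : Type*} [CStarAlgebra A]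
    [PartialOrder A] [StarOrderedRing A] [Fintype ι] {p : ι → A}
    (hp : ∀ i, IsStarProjection (p i)) (hsum : ∑ i, p i = 1) :
    CompleteOrthogonalIdempotents p := by
  classical
  refine CompleteOrthogonalIdempotents.iff_ortho_complete.2 ⟨fun i j hij => ?_, hsum⟩
  refine (hp i).mul_eq_zero_of_add_le_one (hp j) ?_
  calc p i + p j = ∑ l ∈ {i, j}, p l := (sum_pair hij).symm
    _ ≤ ∑ l, p l := sum_le_sum_of_subset_of_nonneg (subset_univ _) fun l _ _ => (hp l).nonneg
    _ = 1 := hsum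

section Relabel

variable {R E ι κ : Type*} [Fintype ι] [DecidableEq κ] [AddCommMonoid E]

variable (R) in
def relabel [Semiring R] [Module R E] (f : ι → κ) : (ι → E) →ₗ[R] κ → E where
  toFun N i := ∑ j with f j = i, N j
  map_add' N N' := by ext i; simp [sum_add_distrib]
  map_smul' r N := by ext i; simp [smul_sum]

variable [Semiring R] [Module R E]

theorem relabel_apply (f : ι → κ) (N : ι → E) (i : κ) :
    relabel R f N i = ∑ j with f j = i, N j := rfl

theorem sum_relabel [Fintype κ] (f : ι → κ) (N : ι → E) : ∑ i, relabel R f N i = ∑ j, N j :=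
  sum_fiberwise _ _ _

end Relabel

section Stochastic

variable {R E ι κ : Type*} [Fintype ι] [DecidableEq ι] [Fintype κ] [DecidableEq κ]
  [CommSemiring R] {q : κ → ι → R}

theorem sum_filter_prod_apply_eq (hq : ∀ j, ∑ i, q i j = 1) (i : κ) (j : ι) :
    ∑ f : ι → κ with f j = i, ∏ j', q (f j') j' = q i j := by
  set t : ι → Finset κ := fun j' => if j' = j then {i} else univ
  -- The functions with `f j = i` form the box `Π j', t j'`, over which the sum factorizes.
  have hfilter : ({f : ι → κ | f j = i} : Finset (ι → κ)) = Fintype.piFinset t := by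
    ext f
    simp [t, mem_ite]
  rw [hfilter, ← prod_univ_sum t fun j' m => q m j',
    Fintype.prod_eq_single j fun j' hj' => by simp [t, hj', hq j']]
  simp [t]

theorem sum_smul_eq_sum_prod_smul_relabel [AddCommMonoid E] [Module R E]
    (hq : ∀ j, ∑ i, q i j = 1) (N : ι → E) :
    (fun i => ∑ j, q i j • N j) = ∑ f : ι → κ, (∏ j, q (f j) j) • relabel R f N := by
  ext i
  calc ∑ j, q i j • N j
      = ∑ j, ∑ f : ι → κ with f j = i, (∏ j', q (f j') j') • N j := by
        simp_rw [← sum_smul, sum_filter_prod_apply_eq hq]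
    _ = ∑ f : ι → κ, ∑ j with f j = i, (∏ j', q (f j') j') • N j := by
        simp_rw [sum_filter]; exact sum_comm
    _ = _ := by simp [relabel_apply, smul_sum]

end Stochastic

theorem sum_smul_mem_convexHull_of_mapsTo_relabel {𝕜 E ι κ : Type*} [Fintype ι] [DecidableEq ι]
    [Fintype κ] [DecidableEq κ] [Field 𝕜] [LinearOrder 𝕜] [IsStrictOrderedRing 𝕜]
    [AddCommGroup E] [Module 𝕜 E] {s : Set (ι → E)} {t : Set (κ → E)}
    (hst : ∀ f : ι → κ, Set.MapsTo (relabel 𝕜 f) s t) {q : κ → ι → 𝕜}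
    (hq₀ : ∀ i j, 0 ≤ q i j) (hq₁ : ∀ j, ∑ i, q i j = 1) {N : ι → E} (hN : N ∈ convexHull 𝕜 s) :
    (fun i => ∑ j, q i j • N j) ∈ convexHull 𝕜 t := by
  rw [sum_smul_eq_sum_prod_smul_relabel hq₁]
  refine (convex_convexHull 𝕜 t).sum_mem (fun f _ => prod_nonneg fun j _ => hq₀ _ _) ?_
    fun f _ => ?_
  · exact (Fintype.prod_sum fun j i => q i j).symm.trans (prod_eq_one fun j _ => hq₁ j)
  · have := Set.mem_image_of_mem (relabel 𝕜 f) hN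
    rw [LinearMap.image_convexHull] at this
    exact convexHull_mono (hst f).image_subset this

theorem mem_convexHull_iff_exists_fin {𝕜 E : Type*} [Field 𝕜] [LinearOrder 𝕜]
    [IsStrictOrderedRing 𝕜] [AddCommGroup E] [Module 𝕜 E] {s : Set E} {x : E} :
    x ∈ convexHull 𝕜 s ↔ ∃ (K : ℕ) (w : Fin K → 𝕜) (z : Fin K → E),
      (∀ k, 0 ≤ w k) ∧ ∑ k, w k = 1 ∧ (∀ k, z k ∈ s) ∧ ∑ k, w k • z k = x := by
  refine ⟨fun hx => ?_, fun ⟨K, w, z, hw₀, hw₁, hz, hx⟩ =>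
    mem_convexHull_of_exists_fintype w z hw₀ hw₁ hz hx⟩
  obtain ⟨ι, _, w, z, hw₀, hw₁, hz, rfl⟩ := mem_convexHull_iff_exists_fintype.1 hx
  let e := (Fintype.equivFin ι).symm
  exact ⟨Fintype.card ι, w ∘ e, z ∘ e, fun k => hw₀ _, (e.sum_comp w).trans hw₁, fun k => hz _,
    e.sum_comp fun i => w i • z i⟩

theorem isProjectivePOVM_iff {d n : ℕ} {P : Fin n → Matrix (Fin d) (Fin d) ℂ} :
    IsProjectivePOVM P ↔ (∀ i, IsStarProjection (P i)) ∧ ∑ i, P i = 1 :=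
  ⟨fun h => ⟨fun i => ⟨(h.2 i).2, (h.2 i).1⟩, h.1.2⟩, fun ⟨hP, hsum⟩ =>
    ⟨⟨fun i => Matrix.nonneg_iff_posSemidef.1 (hP i).nonneg, hsum⟩,
      fun i => ⟨(hP i).isSelfAdjoint, (hP i).isIdempotentElem⟩⟩⟩

theorem isProjectivePOVM_relabel {d n m : ℕ} {P : Fin n → Matrix (Fin d) (Fin d) ℂ}
    (hP : IsProjectivePOVM P) (f : Fin n → Fin m) : IsProjectivePOVM (relabel ℝ f P) := by
  rw [isProjectivePOVM_iff] at hP ⊢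
  have hO := (CompleteOrthogonalIdempotents.of_isStarProjection hP.1 hP.2).toOrthogonalIdempotents
  exact ⟨fun i => ⟨hO.isIdempotentElem_sum, isSelfAdjoint_sum _ fun j _ => (hP.1 j).isSelfAdjoint⟩,
    (sum_relabel f P).trans hP.2⟩

theorem mem_SP_iff {d n : ℕ} {M : Fin n → Matrix (Fin d) (Fin d) ℂ} :
    M ∈ SP d n ↔ ∃ q : Fin n → Fin n → ℝ, (∀ i j, 0 ≤ q i j) ∧ (∀ j, ∑ i, q i j = 1) ∧
      ∃ N ∈ convexHull ℝ {P | IsProjectivePOVM P}, M = fun i => ∑ j, q i j • N j := by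
  simp_rw [mem_convexHull_iff_exists_fin]
  constructor
  · rintro ⟨K, P, p, q, hP, hp₀, hp₁, hq₀, hq₁, hM⟩
    refine ⟨q, hq₀, hq₁, _, ⟨K, p, P, hp₀, hp₁, hP, rfl⟩, funext fun i => ?_⟩
    simp [hM, Complex.coe_smul, Finset.sum_apply]
  · rintro ⟨q, hq₀, hq₁, _, ⟨K, p, P, hp₀, hp₁, hP, rfl⟩, rfl⟩
    exact ⟨K, P, p, q, hP, hp₀, hp₁, hq₀, hq₁, fun i => by
      simp [Complex.coe_smul, Finset.sum_apply]⟩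

theorem SP_eq_convexHull_projective (d n : ℕ) :
    SP d n =
      convexHull ℝ {P : Fin n → Matrix (Fin d) (Fin d) ℂ | IsProjectivePOVM P} := by
  ext M
  rw [mem_SP_iff]
  constructor
  · rintro ⟨q, hq₀, hq₁, N, hN, rfl⟩
    exact sum_smul_mem_convexHull_of_mapsTo_relabel (fun f _ hP => isProjectivePOVM_relabel hP f)
      hq₀ hq₁ hN
  · intro hM
    refine ⟨(1 : Matrix (Fin n) (Fin n) ℝ), fun i j => ?_, fun j => ?_, M, hM, ?_⟩
    · exact Matrix.zero_le_one_elem i j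
    · simp [Matrix.one_apply]
    · simp [Matrix.one_apply, ite_smul]
end

section
/- Projective simulation of noisy rank-one POVMs at visibility 1/d: let M be an n-outcome POVM on ℂ^d with rank-one effects M_i = α_i Π_i, where Π_i are rank-one orthogonal projections and ∑ α_i = d. Then Φ_{1/d}(M) = ∑_{i=1}^n (α_i/d) N_i, where N_i is the POVM obtained from the two-outcome projective measurement (Π_i, I-Π_i) by post-processing: output i on outcome Π_i, and output j with probability α_j/d on outcome I-Π_i. In particular Φ_{1/d}(M) is PM-simulable. -/
open scoped ComplexOrder

/-- The depolarising map with visibility `t`, applied effect-wise to a POVM. -/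
noncomputable def depolPOVM {d n : ℕ} (t : ℝ)
    (M : Fin n → Matrix (Fin d) (Fin d) ℂ) : Fin n → Matrix (Fin d) (Fin d) ℂ :=
  fun i => (t : ℂ) • M i + (((1 - t : ℝ) : ℂ) * ((M i).trace / (d : ℂ))) • 1

lemma proj_psd {d : ℕ} {M : Matrix (Fin d) (Fin d) ℂ} (h1 : M.IsHermitian)
    (h2 : M * M = M) : M.PosSemidef := by
  have := Matrix.posSemidef_conjTranspose_mul_self M
  rwa [h1.eq, h2] at this

theorem rankOne_depol_simulation {d n : ℕ} (hd : 0 < d)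
    (α : Fin n → ℝ) (Pr : Fin n → Matrix (Fin d) (Fin d) ℂ)
    (hPr : ∀ i, (Pr i).IsHermitian ∧ Pr i * Pr i = Pr i ∧ (Pr i).trace = 1)
    (hα0 : ∀ i, 0 ≤ α i) (hαsum : ∑ i, α i = (d : ℝ))
    (hPOVM : IsPOVM (fun i => ((α i : ℝ) : ℂ) • Pr i)) :
    (∀ i,
      depolPOVM ((d : ℝ)⁻¹) (fun j => ((α j : ℝ) : ℂ) • Pr j) i =
        ((α i / d : ℝ) : ℂ) • (Pr i + ((α i / d : ℝ) : ℂ) • (1 - Pr i)) +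
          ∑ j ∈ Finset.univ \ {i},
            ((α j / d : ℝ) : ℂ) • (((α i / d : ℝ) : ℂ) • (1 - Pr j))) ∧
    depolPOVM ((d : ℝ)⁻¹) (fun j => ((α j : ℝ) : ℂ) • Pr j) ∈
      convexHull ℝ {P : Fin n → Matrix (Fin d) (Fin d) ℂ | IsProjectivePOVM P} := by
  have hd0R : (d : ℝ) ≠ 0 := Nat.cast_ne_zero.mpr hd.ne'
  have hd0 : (d : ℂ) ≠ 0 := Nat.cast_ne_zero.mpr hd.ne'
  have S1 : ∑ j, ((α j : ℝ) : ℂ) • Pr j = (1 : Matrix (Fin d) (Fin d) ℂ) := hPOVM.2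
  have S2 : ∑ j, ((α j : ℝ) : ℂ) = (d : ℂ) := by
    have := congrArg (fun r : ℝ => (r : ℂ)) hαsum
    push_cast at this
    exact this
  -- key sum lemma
  have L : ∀ e : ℂ, ∑ j, (e * ((α j : ℝ) : ℂ)) • ((1 : Matrix (Fin d) (Fin d) ℂ) - Pr j)
      = (e * (d : ℂ)) • (1 : Matrix (Fin d) (Fin d) ℂ) - e • (1 : Matrix (Fin d) (Fin d) ℂ) := by
    intro e
    have h1 : ∑ j, (e * ((α j : ℝ) : ℂ)) • (1 : Matrix (Fin d) (Fin d) ℂ)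
        = (e * (d : ℂ)) • (1 : Matrix (Fin d) (Fin d) ℂ) := by
      rw [← Finset.sum_smul, ← Finset.mul_sum, S2]
    have h2 : ∑ j, (e * ((α j : ℝ) : ℂ)) • Pr j = e • (1 : Matrix (Fin d) (Fin d) ℂ) := by
      simp_rw [mul_smul, ← Finset.smul_sum, S1]
    calc ∑ j, (e * ((α j : ℝ) : ℂ)) • ((1 : Matrix (Fin d) (Fin d) ℂ) - Pr j)
        = ∑ j, ((e * ((α j : ℝ) : ℂ)) • (1 : Matrix (Fin d) (Fin d) ℂ)
            - (e * ((α j : ℝ) : ℂ)) • Pr j) := by simp_rw [smul_sub]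
      _ = _ := by rw [Finset.sum_sub_distrib, h1, h2]
  have key : ∀ k, depolPOVM ((d : ℝ)⁻¹) (fun j => ((α j : ℝ) : ℂ) • Pr j) k
      = (((α k : ℝ) : ℂ) / d) • Pr k
        + ((((α k : ℝ) : ℂ) / d) * (1 - (d : ℂ)⁻¹)) • (1 : Matrix (Fin d) (Fin d) ℂ) := by
    intro k
    simp only [depolPOVM, Matrix.trace_smul, (hPr k).2.2, smul_eq_mul, mul_one]
    push_cast
    match_scalars <;> ring
  constructor
  · intro i
    have hsd : ∑ j ∈ Finset.univ \ {i},
        ((α j / d : ℝ) : ℂ) • (((α i / d : ℝ) : ℂ) • ((1 : Matrix (Fin d) (Fin d) ℂ) - Pr j))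
        = (∑ j, ((α j / d : ℝ) : ℂ) • (((α i / d : ℝ) : ℂ) • ((1 : Matrix (Fin d) (Fin d) ℂ) - Pr j)))
          - ((α i / d : ℝ) : ℂ) • (((α i / d : ℝ) : ℂ) • ((1 : Matrix (Fin d) (Fin d) ℂ) - Pr i)) := by
      rw [Finset.sum_sdiff_eq_sub (Finset.subset_univ {i}), Finset.sum_singleton]
    have hsum : ∑ j, ((α j / d : ℝ) : ℂ) • (((α i / d : ℝ) : ℂ) • ((1 : Matrix (Fin d) (Fin d) ℂ) - Pr j))
        = ((((α i : ℝ) : ℂ) / d / d) * (d : ℂ)) • (1 : Matrix (Fin d) (Fin d) ℂ)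
          - (((α i : ℝ) : ℂ) / d / d) • (1 : Matrix (Fin d) (Fin d) ℂ) := by
      rw [← L ((((α i : ℝ) : ℂ) / d / d))]
      refine Finset.sum_congr rfl fun j _ => ?_
      push_cast
      match_scalars <;> ring
    rw [key i, hsd, hsum]
    push_cast
    match_scalars <;> field_simp <;> ring
  · -- convex hull part
    set P : Fin n × Fin n → Fin n → Matrix (Fin d) (Fin d) ℂ :=
      fun p k => (if k = p.1 then Pr p.1 else 0) + (if k = p.2 then 1 - Pr p.1 else 0) with hP
    have hproj : ∀ p : Fin n × Fin n, IsProjectivePOVM (P p) := by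
      intro ⟨i, j⟩
      have hherm : ∀ k, (P (i, j) k).IsHermitian ∧ P (i, j) k * P (i, j) k = P (i, j) k := by
        intro k
        have h1 := (hPr i).1
        have h2 := (hPr i).2.1
        simp only [hP]
        by_cases hki : k = i <;> by_cases hkj : k = j
        · subst hki; subst hkj
          have e : Pr k + (1 - Pr k) = 1 := by abel
          simp only [if_pos rfl, if_true]
          rw [e]
          exact ⟨Matrix.isHermitian_one, one_mul 1⟩
        · subst hki
          simp only [if_pos rfl, if_neg hkj, add_zero]
          exact ⟨h1, h2⟩
        · subst hkj
          simp only [if_pos rfl, if_neg hki, zero_add]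
          constructor
          · exact (Matrix.isHermitian_one).sub h1
          · simp [mul_sub, sub_mul, h2]
        · simp [hki, hkj]
      refine ⟨⟨fun k => proj_psd (hherm k).1 (hherm k).2, ?_⟩, hherm⟩
      simp only [hP]
      rw [Finset.sum_add_distrib]
      simp
    set w : Fin n × Fin n → ℝ := fun p => α p.1 * α p.2 / ((d : ℝ) * d) with hw
    have hw0 : ∀ p : Fin n × Fin n, 0 ≤ w p := by
      intro p
      exact div_nonneg (mul_nonneg (hα0 _) (hα0 _)) (by positivity)
    have hwsum : ∑ p : Fin n × Fin n, w p = 1 := by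
      simp only [hw]
      rw [← Finset.sum_div, Fintype.sum_prod_type, ← Finset.sum_mul_sum, hαsum]
      field_simp
    have hrsmul : ∀ (r : ℝ) (M : Matrix (Fin d) (Fin d) ℂ), r • M = ((r : ℂ)) • M := by
      intro r M
      ext a b
      simp [Complex.real_smul]
    have hcm : Finset.univ.centerMass w P = depolPOVM ((d : ℝ)⁻¹) (fun j => ((α j : ℝ) : ℂ) • Pr j) := by
      rw [Finset.centerMass, hwsum]
      simp only [inv_one, one_smul]
      funext k
      rw [key k]
      have happ : (∑ p : Fin n × Fin n, w p • P p) k = ∑ p : Fin n × Fin n, ((w p : ℂ)) • P p k := by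
        rw [Finset.sum_apply]
        exact Finset.sum_congr rfl fun p _ => by rw [Pi.smul_apply, hrsmul]
      rw [happ]
      have expand : ∀ p : Fin n × Fin n, ((w p : ℂ)) • P p k
          = (if k = p.1 then ((w p : ℂ)) • Pr p.1 else 0)
            + (if k = p.2 then ((w p : ℂ)) • ((1 : Matrix (Fin d) (Fin d) ℂ) - Pr p.1) else 0) := by
        intro p
        simp only [hP, smul_add]
        congr 1 <;> split <;> simp
      simp_rw [expand]
      rw [Finset.sum_add_distrib]
      have hA : ∑ p : Fin n × Fin n, (if k = p.1 then ((w p : ℂ)) • Pr p.1 else 0)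
          = (((α k : ℝ) : ℂ) / d) • Pr k := by
        rw [Fintype.sum_prod_type_right]
        simp_rw [Finset.sum_ite_eq, Finset.mem_univ, if_true]
        rw [← Finset.sum_smul]
        congr 1
        simp only [hw]
        push_cast
        rw [← Finset.sum_div, ← Finset.mul_sum, S2]
        field_simp
      have hB : ∑ p : Fin n × Fin n, (if k = p.2 then ((w p : ℂ)) • ((1 : Matrix (Fin d) (Fin d) ℂ) - Pr p.1) else 0)
          = ((((α k : ℝ) : ℂ) / ((d : ℂ) * d)) * (d : ℂ)) • (1 : Matrix (Fin d) (Fin d) ℂ)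
            - (((α k : ℝ) : ℂ) / ((d : ℂ) * d)) • (1 : Matrix (Fin d) (Fin d) ℂ) := by
        rw [Fintype.sum_prod_type]
        simp_rw [Finset.sum_ite_eq, Finset.mem_univ, if_true]
        rw [← L ((((α k : ℝ) : ℂ)) / ((d : ℂ) * d))]
        refine Finset.sum_congr rfl fun i _ => ?_
        simp only [hw]
        push_cast
        match_scalars <;> ring
      rw [hA, hB]
      match_scalars <;> field_simp <;> ring
    rw [← hcm]
    exact Finset.centerMass_mem_convexHull _ (fun p _ => hw0 p) (by rw [hwsum]; norm_num)
      (fun p _ => hproj p)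
end

section
/- Lower bound on the critical visibility in arbitrary dimension: for every n-outcome POVM M on ℂ^d, the depolarised POVM Φ_{1/d}(M) is a convex combination of projective measurements (possibly after embedding into more outcomes); hence t(d) ≥ 1/d. -/
open scoped ComplexOrder

/-!
Diagonalise every effect, `Mᵢ = ∑ₖ λᵢₖ Pᵢₖ` with rank-one projections `Pᵢₖ`; taking the trace
of `∑ᵢ Mᵢ = 1` gives `∑ᵢₖ λᵢₖ = d`. With probability `(λᵢₖ / d) · (tr Mⱼ / d)` perform the
projective measurement `{Pᵢₖ, 1 - Pᵢₖ}` and report `i` on the first outcome, `j` on the second.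
Outcome `l` then has effect `Mₗ / d + (tr Mₗ / d) (1 - 1 / d) • 1`, which is `Φ_{1/d}(M)ₗ`.
-/

open Matrix

theorem IsStarProjection.posSemidef {m 𝕜 : Type*} [Fintype m] [RCLike 𝕜]
    {P : Matrix m m 𝕜} (hP : IsStarProjection P) : P.PosSemidef := by
  have hPH : Pᴴ = P := hP.isSelfAdjoint.star_eq
  simpa only [hPH, hP.isIdempotentElem.eq] using posSemidef_conjTranspose_mul_self P

namespace Matrix

variable {m 𝕜 : Type*} [Fintype m] [RCLike 𝕜]

theorem isStarProjection_vecMulVec_self_star {u : m → 𝕜} (hu : star u ⬝ᵥ u = 1) :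
    IsStarProjection (vecMulVec u (star u)) where
  isIdempotentElem := by
    rw [IsIdempotentElem, vecMulVec_mul_vecMulVec, hu, one_smul]
  isSelfAdjoint := by
    rw [IsSelfAdjoint, star_eq_conjTranspose, conjTranspose_vecMulVec, star_star]

theorem trace_vecMulVec_self_star {u : m → 𝕜} (hu : star u ⬝ᵥ u = 1) :
    (vecMulVec u (star u)).trace = 1 := by
  rw [trace_vecMulVec, dotProduct_comm, hu]

namespace IsHermitian

variable [DecidableEq m] {A : Matrix m m 𝕜}

theorem star_eigenvectorBasis_dotProduct_self (hA : A.IsHermitian) (k : m) :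
    star ⇑(hA.eigenvectorBasis k) ⬝ᵥ ⇑(hA.eigenvectorBasis k) = 1 := by
  rw [dotProduct_comm, ← EuclideanSpace.inner_eq_star_dotProduct,
    inner_self_eq_norm_sq_to_K, hA.eigenvectorBasis.orthonormal.1 k]
  simp

theorem eq_sum_eigenvalues_smul_vecMulVec (hA : A.IsHermitian) :
    A = ∑ k, hA.eigenvalues k •
      vecMulVec ⇑(hA.eigenvectorBasis k) (star ⇑(hA.eigenvectorBasis k)) := by
  conv_lhs => rw [hA.spectral_theorem]
  ext a b
  simp only [Unitary.conjStarAlgAut_apply, mul_apply, diagonal_apply, Matrix.sum_apply,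
    smul_apply, vecMulVec_apply, RCLike.real_smul_eq_coe_mul, mul_ite, mul_zero,
    Finset.sum_ite_eq', Finset.mem_univ, if_true]
  refine Finset.sum_congr rfl fun k _ => ?_
  simp only [eigenvectorUnitary_apply, Function.comp_apply, star_apply, RCLike.star_def,
    Pi.star_apply]
  ring

end IsHermitian

end Matrix

theorem Finset.sum_sum_sum_smul_single_add_single {R ι κ E : Type*} [CommSemiring R]
    [Fintype ι] [DecidableEq ι] [Fintype κ] [AddCommMonoid E] [Module R E]
    (a : ι → κ → R) (q : ι → R) (A B : ι → κ → E) :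
    ∑ i, ∑ k, ∑ j, (a i k * q j) • (Pi.single i (A i k) + Pi.single j (B i k)) =
      fun l => (∑ j, q j) • ∑ k, a l k • A l k + q l • ∑ i, ∑ k, a i k • B i k := by
  funext l
  simp only [Finset.sum_apply, Pi.add_apply, Pi.smul_apply, smul_add, Finset.sum_add_distrib,
    Pi.single_apply, smul_ite, smul_zero, mul_smul]
  congr 1
  · rw [Finset.sum_eq_single_of_mem l (Finset.mem_univ l) fun i _ hi => by simp [Ne.symm hi]]
    simp only [Finset.smul_sum, Finset.sum_smul]
    exact Finset.sum_congr rfl fun k _ => Finset.sum_congr rfl fun j _ => smul_comm _ _ _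
  · simp only [Finset.sum_ite_eq, Finset.mem_univ, if_true, Finset.smul_sum]
    exact Finset.sum_congr rfl fun i _ => Finset.sum_congr rfl fun k _ => smul_comm _ _ _

section POVM

variable {d n : ℕ}

theorem isProjectivePOVM_of_isStarProjection {P : Fin n → Matrix (Fin d) (Fin d) ℂ}
    (hP : ∀ i, IsStarProjection (P i)) (hsum : ∑ i, P i = 1) : IsProjectivePOVM P :=
  ⟨⟨fun i => (hP i).posSemidef, hsum⟩,
    fun i => ⟨(hP i).isSelfAdjoint, (hP i).isIdempotentElem⟩⟩

theorem isProjectivePOVM_single_add_single_one_sub (i j : Fin n)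
    {Q : Matrix (Fin d) (Fin d) ℂ} (hQ : IsStarProjection Q) :
    IsProjectivePOVM (Pi.single i Q + Pi.single j (1 - Q)) := by
  refine isProjectivePOVM_of_isStarProjection (fun l => ?_) ?_
  · simp only [Pi.add_apply, Pi.single_apply]
    split_ifs
    · simp [IsStarProjection.one]
    · simpa using hQ
    · simpa using hQ.one_sub
    · simp [IsStarProjection.zero]
  · simp [Finset.sum_add_distrib, Finset.sum_pi_single']

theorem depolPOVM_apply_of_trace_eq (t : ℝ) {M : Fin n → Matrix (Fin d) (Fin d) ℂ} {i : Fin n}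
    {r : ℝ} (hr : (M i).trace = r) :
    depolPOVM t M i = t • M i + ((1 - t) * (r / d)) • 1 := by
  simp only [depolPOVM, hr, ← Complex.coe_smul]
  push_cast
  rfl

theorem depolPOVM_inv_mem_convexHull_of_rankOne_decomposition {κ : Type*} [Fintype κ]
    (hd : 0 < d) {M : Fin n → Matrix (Fin d) (Fin d) ℂ} (hsum : ∑ i, M i = 1)
    {c : Fin n → κ → ℝ} (hc : ∀ i k, 0 ≤ c i k)
    {P : Fin n → κ → Matrix (Fin d) (Fin d) ℂ} (hP : ∀ i k, IsStarProjection (P i k))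
    (htr : ∀ i k, (P i k).trace = 1) (hM : ∀ i, M i = ∑ k, c i k • P i k) :
    depolPOVM (d⁻¹) M ∈
      convexHull ℝ {P : Fin n → Matrix (Fin d) (Fin d) ℂ | IsProjectivePOVM P} := by
  have hd' : (d : ℝ) ≠ 0 := Nat.cast_ne_zero.mpr hd.ne'
  have htrM : ∀ i, (M i).trace = ((∑ k, c i k : ℝ) : ℂ) := fun i => by
    simp [hM i, trace_sum, trace_smul, htr]
  have hc_sum : ∑ i, ∑ k, c i k = d := by
    have : ((∑ i, ∑ k, c i k : ℝ) : ℂ) = d := by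
      rw [Complex.ofReal_sum]
      simp only [← htrM, ← trace_sum, hsum, trace_one, Fintype.card_fin]
    exact_mod_cast this
  set a : Fin n → κ → ℝ := fun i k => c i k / d
  set q : Fin n → ℝ := fun j => (∑ k, c j k) / d
  have hq : ∑ j, q j = 1 := by simp only [q, ← Finset.sum_div, hc_sum, div_self hd']
  have ha : ∑ i, ∑ k, a i k = 1 := by simp only [a, ← Finset.sum_div, hc_sum, div_self hd']
  have haP : ∀ i, ∑ k, a i k • P i k = (d⁻¹ : ℝ) • M i := fun i => by
    simp only [a, hM i, Finset.smul_sum, smul_smul, div_eq_inv_mul]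
  have haQ : ∑ i, ∑ k, a i k • (1 - P i k) =
      (1 - (d : ℝ)⁻¹) • (1 : Matrix (Fin d) (Fin d) ℂ) := by
    simp only [smul_sub, Finset.sum_sub_distrib, ← Finset.sum_smul, ha, haP, ← Finset.smul_sum,
      hsum, sub_smul, one_smul]
  have hmix : ∑ i, ∑ k, ∑ j, (a i k * q j) • (Pi.single i (P i k) + Pi.single j (1 - P i k)) =
      depolPOVM (d⁻¹) M := by
    rw [Finset.sum_sum_sum_smul_single_add_single]
    funext l
    rw [hq, one_smul, haP, haQ, smul_smul, depolPOVM_apply_of_trace_eq _ (htrM l)]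
    congr 2
    simp only [q]
    ring
  have hmem := (convex_convexHull ℝ
      {P : Fin n → Matrix (Fin d) (Fin d) ℂ | IsProjectivePOVM P}).sum_mem
    (t := Finset.univ) (w := fun x : Fin n × κ × Fin n => a x.1 x.2.1 * q x.2.2)
    (z := fun x => Pi.single x.1 (P x.1 x.2.1) + Pi.single x.2.2 (1 - P x.1 x.2.1))
    (fun x _ => mul_nonneg (div_nonneg (hc _ _) d.cast_nonneg)
      (div_nonneg (Finset.sum_nonneg fun k _ => hc _ k) d.cast_nonneg))
    (by simp only [Fintype.sum_prod_type, ← Finset.mul_sum, hq, ha, mul_one])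
    (fun x _ => subset_convexHull ℝ _ (isProjectivePOVM_single_add_single_one_sub _ _ (hP _ _)))
  simpa only [Fintype.sum_prod_type, hmix] using hmem

end POVM

/-- Lower bound for the critical visibility in arbitrary dimension: for every
POVM `M` on `ℂ^d`, the depolarised POVM `Φ_{1/d}(M)` is PM-simulable,
i.e. a convex combination of projective measurements; hence `t(d) ≥ 1/d`. -/
theorem depol_inv_dim_simulable {d n : ℕ} (hd : 0 < d)
    (M : Fin n → Matrix (Fin d) (Fin d) ℂ) (hM : IsPOVM M) :
    depolPOVM ((d : ℝ)⁻¹) M ∈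
      convexHull ℝ {P : Fin n → Matrix (Fin d) (Fin d) ℂ | IsProjectivePOVM P} := by
  obtain ⟨hpsd, hsum⟩ := hM
  have hH : ∀ i, (M i).IsHermitian := fun i => (hpsd i).isHermitian
  have hunit := fun i k => (hH i).star_eigenvectorBasis_dotProduct_self k
  exact depolPOVM_inv_mem_convexHull_of_rankOne_decomposition hd hsum
    (fun i k => (hpsd i).eigenvalues_nonneg k)
    (fun i k => isStarProjection_vecMulVec_self_star (hunit i k))
    (fun i k => trace_vecMulVec_self_star (hunit i k))
    (fun i => (hH i).eq_sum_eigenvalues_smul_vecMulVec)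
end

section
/- Characterisation of the convex hull of m-outcome measurements: an n-outcome POVM M on ℂ^d lies in conv(P(d,n;m)) if and only if there exist nonnegative-operator tuples N_X indexed by m-element subsets X of {1,...,n} and nonnegative weights p_X summing to 1, such that M = ∑_X N_X, each N_X has (N_X)_i = 0 for i ∉ X, (N_X)_i ≥ 0 for all i, and ∑_{i=1}^n (N_X)_i = p_X · I. -/
open scoped ComplexOrder
open Matrix

/-- `P(d,n;m)`: `n`-outcome POVMs on `ℂ^d` whose nonzero effects are supported
on some `m`-element subset of outcomes. -/
def mOutcome (d n m : ℕ) : Set (Fin n → Matrix (Fin d) (Fin d) ℂ) :=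
  {N | IsPOVM N ∧ ∃ X : Finset (Fin n), X.card = m ∧ ∀ i ∉ X, N i = 0}

lemma coe_smul_mat {d : ℕ} (r : ℝ) (A : Matrix (Fin d) (Fin d) ℂ) :
    ((r : ℂ)) • A = r • A := by
  rw [show ((r : ℂ)) = algebraMap ℝ ℂ r from (Complex.coe_algebraMap ▸ rfl)]
  exact algebraMap_smul ℂ r A

lemma psd_smul_real {d : ℕ} {A : Matrix (Fin d) (Fin d) ℂ} (hA : A.PosSemidef)
    {c : ℝ} (hc : 0 ≤ c) : (c • A).PosSemidef := by
  rw [show c • A = ((c : ℂ)) • A from (algebraMap_smul ℂ c A).symm]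
  refine Matrix.PosSemidef.of_dotProduct_mulVec_nonneg ?_ ?_
  · have := hA.isHermitian
    unfold Matrix.IsHermitian at *
    rw [Matrix.conjTranspose_smul, this, Complex.star_def, Complex.conj_ofReal]
  · intro x
    rw [Matrix.smul_mulVec, dotProduct_smul]
    exact smul_nonneg (by exact_mod_cast hc) (hA.dotProduct_mulVec_nonneg x)

lemma psd_sum {d : ℕ} {ι : Type*} (s : Finset ι) (A : ι → Matrix (Fin d) (Fin d) ℂ)
    (h : ∀ i ∈ s, (A i).PosSemidef) : (∑ i ∈ s, A i).PosSemidef := by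
  classical
  induction s using Finset.induction_on with
  | empty => simpa using Matrix.PosSemidef.zero
  | insert _ _ hni ih =>
    rw [Finset.sum_insert hni]
    exact Matrix.PosSemidef.add (h _ (Finset.mem_insert_self _ _))
      (ih fun i hi => h i (Finset.mem_insert_of_mem hi))

lemma psd_sum_eq_zero {d : ℕ} {ι : Type*} (s : Finset ι) (A : ι → Matrix (Fin d) (Fin d) ℂ)
    (h : ∀ i ∈ s, (A i).PosSemidef) (hsum : ∑ i ∈ s, A i = 0) :
    ∀ i ∈ s, A i = 0 := by
  intro i hi
  have key : ∀ x : Fin d → ℂ, A i *ᵥ x = 0 := by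
    intro x
    have hz : ∑ t ∈ s, star x ⬝ᵥ (A t) *ᵥ x = 0 := by
      have : ∑ t ∈ s, star x ⬝ᵥ (A t) *ᵥ x = star x ⬝ᵥ (∑ t ∈ s, A t) *ᵥ x :=
        (map_sum (AddMonoidHom.mk' (fun B : Matrix (Fin d) (Fin d) ℂ => star x ⬝ᵥ B *ᵥ x)
          (fun B C => by simp only [Matrix.add_mulVec, dotProduct_add])) A s).symm
      rw [this, hsum, Matrix.zero_mulVec, dotProduct_zero]
    have hterm : star x ⬝ᵥ (A i) *ᵥ x = 0 :=
      (Finset.sum_eq_zero_iff_of_nonneg (fun t ht => (h t ht).dotProduct_mulVec_nonneg x)).mp hz i hi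
    exact ((h i hi).dotProduct_mulVec_zero_iff x).mp hterm
  ext j k
  have := congrFun (key (Pi.single k 1)) j
  simpa [Matrix.mulVec_single] using this

/-- Characterisation of the convex hull of `m`-outcome measurements
(Lemma on `m`-chotomic simulability, giving the SDP form). -/
theorem convexHull_mOutcome_iff {d n m : ℕ} (hd : 0 < d) (hm : m ≤ n)
    (M : Fin n → Matrix (Fin d) (Fin d) ℂ) (hM : IsPOVM M) :
    M ∈ convexHull ℝ (mOutcome d n m) ↔
      ∃ (N : Finset (Fin n) → (Fin n → Matrix (Fin d) (Fin d) ℂ))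
        (p : Finset (Fin n) → ℝ),
        (∀ X ∈ (Finset.univ : Finset (Fin n)).powersetCard m, ∀ i, ((N X) i).PosSemidef) ∧
        (∀ X ∈ (Finset.univ : Finset (Fin n)).powersetCard m, ∀ i ∉ X, (N X) i = 0) ∧
        (∀ X ∈ (Finset.univ : Finset (Fin n)).powersetCard m,
          ∑ i, (N X) i = ((p X : ℝ) : ℂ) • (1 : Matrix (Fin d) (Fin d) ℂ)) ∧
        (∀ X ∈ (Finset.univ : Finset (Fin n)).powersetCard m, 0 ≤ p X) ∧
        (∑ X ∈ (Finset.univ : Finset (Fin n)).powersetCard m, p X) = 1 ∧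
        (∀ i, M i = ∑ X ∈ (Finset.univ : Finset (Fin n)).powersetCard m, (N X) i) := by
  classical
  constructor
  · intro h
    rw [convexHull_eq] at h
    obtain ⟨ι, t, w, z, hw0, hw1, hz, hcm⟩ := h
    have hMeq : ∑ i ∈ t, w i • z i = M := by
      rw [← Finset.centerMass_eq_of_sum_1 t z hw1]; exact hcm
    -- choose supporting subset for each element
    have hg : ∀ i ∈ t, ∃ X : Finset (Fin n), X.card = m ∧ ∀ j ∉ X, z i j = 0 :=
      fun i hi => (hz i hi).2
    choose! g hg1 hg2 using hg
    have hmaps : ∀ i ∈ t, g i ∈ (Finset.univ : Finset (Fin n)).powersetCard m := by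
      intro i hi
      rw [Finset.mem_powersetCard_univ]
      exact hg1 i hi
    refine ⟨fun X j => ∑ i ∈ t.filter (fun i => g i = X), w i • z i j,
      fun X => ∑ i ∈ t.filter (fun i => g i = X), w i, ?_, ?_, ?_, ?_, ?_, ?_⟩
    · intro X _ j
      exact psd_sum _ _ fun i hi =>
        psd_smul_real ((hz i (Finset.mem_filter.mp hi).1).1.1 j)
          (hw0 i (Finset.mem_filter.mp hi).1)
    · intro X _ j hjX
      refine Finset.sum_eq_zero fun i hi => ?_
      obtain ⟨hit, hgi⟩ := Finset.mem_filter.mp hi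
      rw [hg2 i hit j (hgi ▸ hjX), smul_zero]
    · intro X _
      rw [Finset.sum_comm]
      have : ∀ i ∈ t.filter (fun i => g i = X), ∑ j, w i • z i j
          = w i • (1 : Matrix (Fin d) (Fin d) ℂ) := by
        intro i hi
        rw [← Finset.smul_sum, (hz i (Finset.mem_filter.mp hi).1).1.2]
      rw [Finset.sum_congr rfl this, ← Finset.sum_smul]
      rw [coe_smul_mat]
    · intro X _
      exact Finset.sum_nonneg fun i hi => hw0 i (Finset.mem_filter.mp hi).1
    · rw [Finset.sum_fiberwise_of_maps_to hmaps]
      exact hw1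
    · intro j
      rw [Finset.sum_fiberwise_of_maps_to hmaps (fun i => w i • z i j)]
      have := congrFun hMeq j
      simpa [Finset.sum_apply] using this.symm
  · rintro ⟨N, p, h1, h2, h3, h4, h5, h6⟩
    set P := (Finset.univ : Finset (Fin n)).powersetCard m with hP
    -- if p X = 0 then N X = 0
    have hzero : ∀ X ∈ P, p X = 0 → ∀ j, N X j = 0 := by
      intro X hX hpX
      have hs : ∑ j, N X j = 0 := by
        rw [h3 X hX, hpX]; simp
      exact fun j => psd_sum_eq_zero Finset.univ (N X) (fun j _ => h1 X hX j) hs j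
        (Finset.mem_univ j)
    set S := P.filter (fun X => p X ≠ 0) with hS
    have hsumS : ∑ X ∈ S, p X = 1 := by
      rw [hS, Finset.sum_filter_of_ne (fun X _ h => h)]
      exact h5
    have hposS : ∀ X ∈ S, 0 < p X := by
      intro X hX
      obtain ⟨hXP, hpne⟩ := Finset.mem_filter.mp hX
      exact lt_of_le_of_ne (h4 X hXP) (Ne.symm hpne)
    have hzmem : ∀ X ∈ S, (p X)⁻¹ • N X ∈ mOutcome d n m := by
      intro X hX
      obtain ⟨hXP, _⟩ := Finset.mem_filter.mp hX
      have hpX := hposS X hX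
      refine ⟨⟨fun j => psd_smul_real (h1 X hXP j) (inv_nonneg.mpr hpX.le), ?_⟩,
        X, Finset.mem_powersetCard_univ.mp hXP, fun j hj => by
          simp [h2 X hXP j hj]⟩
      have : ∑ j, ((p X)⁻¹ • N X) j = (p X)⁻¹ • ∑ j, N X j := by
        simp [Finset.smul_sum]
      rw [this, h3 X hXP,
        coe_smul_mat, inv_smul_smul₀ hpX.ne']
    have hcm : S.centerMass p (fun X => (p X)⁻¹ • N X) = M := by
      rw [Finset.centerMass_eq_of_sum_1 _ _ hsumS]
      have : ∀ X ∈ S, p X • ((p X)⁻¹ • N X) = N X := by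
        intro X hX
        rw [smul_inv_smul₀ (hposS X hX).ne']
      rw [Finset.sum_congr rfl this]
      have hfull : ∑ X ∈ S, N X = ∑ X ∈ P, N X := by
        rw [hS]
        exact Finset.sum_filter_of_ne (by
          intro X hX hne
          intro hp
          exact hne (funext fun j => hzero X hX hp j))
      rw [hfull]
      funext j
      rw [Finset.sum_apply]
      exact (h6 j).symm
    rw [← hcm]
    exact Finset.centerMass_mem_convexHull S (fun X hX => (hposS X hX).le)
      (by rw [hsumS]; norm_num) hzmem
end
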